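/- In an oriented dynamic ring of size n, let U be a set of nodes with 1 < |U| < n inducing an arc of the footprint, with boundary edges e_c (the clockwise edge leaving U) and e_cc (the counter-clockwise edge leaving U). There exists an adaptive adversary strategy, choosing at each round the (at most one) missing edge as a function of the agents' intended moves in that round, such that in every resulting execution in which the agents start inside U, no agent ever occupies a node outside U at the end of a round r unless in round r one agent attempted to traverse e_c and another agent simultaneously attempted to traverse e_cc. -/
import Mathlib


namespace BHS

/-- Direction of a (possible) move on an oriented ring: `cw` is clockwise (right
port), `ccw` is counter-clockwise (left port), `stay` means no move. -/
inductive Dir where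
  | stay : Dir
  | ccw  : Dir
  | cw   : Dir
deriving DecidableEq

/-- Outcome of attempting a move in a given direction from node `v` of the ring
`v_0, …, v_{n-1}` when the (at most one) missing footprint edge of the current
round is `e` (edge `e` joins `v_e` and `v_{e+1}`): the move succeeds, placing the
agent at the neighbouring node in the next round, exactly when the traversed edge
is present. -/
def applyMove {n : ℕ} (e : Option (ZMod n)) (v : ZMod n) : Dir → ZMod n
  | .stay => v
  | .cw   => if e = some v then v else v + 1
  | .ccw  => if e = some (v - 1) then v else v - 1

/-- The arc of `m` consecutive nodes `a, a+1, …, a+m-1` of the footprint. -/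
def arc (n : ℕ) (a : ZMod n) (m : ℕ) : Set (ZMod n) :=
  {v | ∃ i : ℕ, i < m ∧ v = a + (i : ZMod n)}

/-- In an oriented dynamic ring of size `n`, let `U` be a set
of nodes with `1 < |U| < n` inducing an arc of the footprint (here
`U = {a, …, a+m-1}` with `1 < m < n`), with boundary edges `e_c` (the clockwise
edge leaving `U`, i.e. footprint edge `a+m-1`) and `e_cc` (the counter-clockwise
edge leaving `U`, i.e. footprint edge `a-1`).  There exists an adaptive adversary
strategy `adv`, choosing at each round the (at most one) missing edge as a
function of the agents' current positions and intended moves in that round, such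
that in every resulting execution of `k` agents starting inside `U`, no agent
ever leaves `U` at the end of a round `r` unless in round `r` one agent attempted
to traverse `e_c` (i.e. was at `a+m-1` and moved clockwise) and another agent
simultaneously attempted to traverse `e_cc` (i.e. was at `a` and moved
counter-clockwise). -/
theorem adversary_confines_to_cut (n m k : ℕ) (a : ZMod n)
    (hm : 1 < m) (hmn : m < n) :
    ∃ adv : (Fin k → ZMod n) → (Fin k → Dir) → Option (ZMod n),
      ∀ (pos : ℕ → Fin k → ZMod n) (intent : ℕ → Fin k → Dir),
        (∀ i, pos 0 i ∈ arc n a m) →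
        (∀ r i, pos (r + 1) i
            = applyMove (adv (pos r) (intent r)) (pos r i) (intent r i)) →
        ∀ r i, pos r i ∈ arc n a m → pos (r + 1) i ∉ arc n a m →
          (∃ i₁, pos r i₁ = a + (m : ZMod n) - 1 ∧ intent r i₁ = Dir.cw) ∧
          (∃ i₂, pos r i₂ = a ∧ intent r i₂ = Dir.ccw) := by
  classical
  refine ⟨fun pos intent =>
    if ∃ i, pos i = a + (m : ZMod n) - 1 ∧ intent i = Dir.cw then
      some (a + (m : ZMod n) - 1)
    else if ∃ i, pos i = a ∧ intent i = Dir.ccw then some (a - 1) else none,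
    ?_⟩
  intro pos intent _ hstep r i hin hout
  obtain ⟨j, hj, hv⟩ := hin
  have hcast : a + ((m - 1 : ℕ) : ZMod n) = a + (m : ZMod n) - 1 := by
    have : ((m - 1 : ℕ) : ZMod n) = (m : ZMod n) - 1 := by
      push_cast [Nat.cast_sub hm.le]; ring
    rw [this]; ring
  have step := hstep r i
  -- general escape facts, for an arbitrary missing edge `e`
  have cw_escape : ∀ e : Option (ZMod n),
      pos (r + 1) i = applyMove e (pos r i) Dir.cw →
      pos r i = a + (m : ZMod n) - 1 ∧ e ≠ some (pos r i) := by
    intro e he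
    simp only [applyMove] at he
    split at he
    · exact absurd (he ▸ ⟨j, hj, hv⟩) hout
    · rename_i hne
      by_cases hjm : j + 1 < m
      · exact absurd ⟨j + 1, hjm, by rw [he, hv]; push_cast; ring⟩ hout
      · have hjeq : j = m - 1 := by omega
        exact ⟨by rw [hv, hjeq, hcast], hne⟩
  have ccw_escape : ∀ e : Option (ZMod n),
      pos (r + 1) i = applyMove e (pos r i) Dir.ccw →
      pos r i = a ∧ e ≠ some (pos r i - 1) := by
    intro e he
    simp only [applyMove] at he
    split at he
    · exact absurd (he ▸ ⟨j, hj, hv⟩) hout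
    · rename_i hne
      by_cases hj0 : j = 0
      · exact ⟨by simpa [hj0] using hv, hne⟩
      · refine absurd ⟨j - 1, by omega, ?_⟩ hout
        rw [he, hv]
        have : (j : ZMod n) = ((j - 1 : ℕ) : ZMod n) + 1 := by
          push_cast [Nat.cast_sub (by omega : 1 ≤ j)]; ring
        rw [this]; ring
  by_cases hc : ∃ i', pos r i' = a + (m : ZMod n) - 1 ∧ intent r i' = Dir.cw
  · -- adversary removes the clockwise boundary edge
    simp only [if_pos hc] at step
    cases hd : intent r i with
    | stay =>
        rw [hd] at step
        simp only [applyMove] at step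
        exact absurd (step ▸ ⟨j, hj, hv⟩) hout
    | cw =>
        rw [hd] at step
        obtain ⟨hpi, hne⟩ := cw_escape _ step
        exact absurd (by rw [hpi]) hne
    | ccw =>
        rw [hd] at step
        obtain ⟨hpi, _⟩ := ccw_escape _ step
        exact ⟨hc, ⟨i, hpi, hd⟩⟩
  · -- no agent tries the clockwise boundary edge
    simp only [if_neg hc] at step
    cases hd : intent r i with
    | stay =>
        rw [hd] at step
        simp only [applyMove] at step
        exact absurd (step ▸ ⟨j, hj, hv⟩) hout
    | cw =>
        rw [hd] at step
        obtain ⟨hpi, _⟩ := cw_escape _ step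
        exact absurd ⟨i, hpi, hd⟩ hc
    | ccw =>
        rw [hd] at step
        obtain ⟨hpi, hne⟩ := ccw_escape _ step
        have hc2 : ∃ i', pos r i' = a ∧ intent r i' = Dir.ccw := ⟨i, hpi, hd⟩
        rw [if_pos hc2] at hne
        exact absurd (by rw [hpi]) hne

end BHS
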